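/- arXiv:2203.14289 — 2 statements merged into one kernel-verified Lean document; each statement's English description precedes it below -/
import Mathlib

section
/- Existence of decomposition into indecomposables: Let P be any poset and let M be a pointwise finite-dimensional P-module. Then there exists a family (M^λ)_{λ ∈ Λ} of indecomposable P-modules such that M ≅ ⊕_{λ ∈ Λ} M^λ. -/
set_option autoImplicit false

open Classical

/-- A persistence module over a poset `P`, with coefficients in a field `k`:
a functor from `P` (viewed as a category) to the category of `k`-vector spaces. -/
structure PersMod (k : Type) [Field k] (P : Type) [Preorder P] : Type 1 where
  V : P → Type
  [acg : ∀ x, AddCommGroup (V x)]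
  [mod : ∀ x, Module k (V x)]
  map : ∀ {x y : P}, x ≤ y → V x →ₗ[k] V y
  map_id : ∀ (x : P) (v : V x), map (le_refl x) v = v
  map_comp : ∀ {x y z : P} (h₁ : x ≤ y) (h₂ : y ≤ z) (v : V x),
    map h₂ (map h₁ v) = map (le_trans h₁ h₂) v

attribute [instance] PersMod.acg PersMod.mod

section Core

variable {k : Type} [Field k] {P : Type} [Preorder P]

/-- Order-convexity of a subset of a poset. -/
def IsConvexSet (I : Set P) : Prop :=
  ∀ ⦃s u t : P⦄, s ∈ I → t ∈ I → s ≤ u → u ≤ t → u ∈ I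

/-- Any two points of `I` are joined by a zigzag of comparable elements of `I`. -/
def ZigzagConnected (I : Set P) : Prop :=
  ∀ s ∈ I, ∀ t ∈ I, ∃ (m : ℕ) (u : ℕ → P), u 0 = s ∧ u m = t ∧
    (∀ i ≤ m, u i ∈ I) ∧ ∀ i < m, u i ≤ u (i + 1) ∨ u (i + 1) ≤ u i

/-- An interval in a poset: a nonempty, order-convex, zigzag-connected subset. -/
def IsPersInterval (I : Set P) : Prop :=
  I.Nonempty ∧ IsConvexSet I ∧ ZigzagConnected I

theorem isConvexSet_empty : IsConvexSet (∅ : Set P) :=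
  fun _ _ _ hs _ _ _ => absurd hs (Set.notMem_empty _)

theorem isConvexSet_Ici (z : P) : IsConvexSet (Set.Ici z) :=
  fun _ _ _ hs _ hsu _ => le_trans hs hsu

/-- The value of the interval module `k_I` at `x`: a copy of `k` if `x ∈ I`, and `0` otherwise,
realized as a submodule of `k`. -/
def intervalSpace (k : Type) [Field k] {P : Type} [Preorder P] (I : Set P) (x : P) :
    Submodule k k where
  carrier := {v | x ∈ I ∨ v = 0}
  add_mem' := by
    rintro a b (ha | ha) (hb | hb)
    · exact Or.inl ha
    · exact Or.inl ha
    · exact Or.inl hb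
    · exact Or.inr (by rw [ha, hb, add_zero])
  zero_mem' := Or.inr rfl
  smul_mem' := by
    rintro c a (ha | ha)
    · exact Or.inl ha
    · exact Or.inr (by rw [ha, smul_zero])

theorem mem_intervalSpace {I : Set P} {x : P} {v : k} :
    v ∈ intervalSpace k I x ↔ x ∈ I ∨ v = 0 := Iff.rfl

/-- The interval module `k_I` of an order-convex set `I`: a copy of `k` at points of `I` and `0`
elsewhere, with identity internal maps within `I` and zero maps otherwise. -/
noncomputable def intervalModule (k : Type) [Field k] {P : Type} [Preorder P]
    (I : Set P) (hI : IsConvexSet I) : PersMod k P where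
  V x := ↥(intervalSpace k I x)
  acg := fun _ => inferInstance
  mod := fun _ => inferInstance
  map {x y} _ :=
    { toFun := fun v => ⟨if y ∈ I then (v : k) else 0, by
        by_cases hy : y ∈ I
        · exact Or.inl hy
        · exact Or.inr (if_neg hy)⟩
      map_add' := by
        intro a b
        apply Subtype.ext
        by_cases hy : y ∈ I <;> simp [hy]
      map_smul' := by
        intro c a
        apply Subtype.ext
        by_cases hy : y ∈ I <;> simp [hy] }
  map_id := by
    intro x v
    apply Subtype.ext
    by_cases hx : x ∈ I
    · simp [hx]
    · rcases v.property with h | h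
      · exact absurd h hx
      · simp [hx, h]
  map_comp := by
    intro x y z h₁ h₂ v
    apply Subtype.ext
    by_cases hz : z ∈ I
    · by_cases hy : y ∈ I
      · simp [hz, hy]
      · have hx : x ∉ I := fun hx => hy (hI hx hz h₁ h₂)
        rcases v.property with h | h
        · exact absurd h hx
        · simp [hz, hy, h]
    · simp [hz]

/-- Pointwise direct sum of a family of persistence modules. -/
noncomputable def dSum {Λ : Type} (Mf : Λ → PersMod k P) : PersMod k P where
  V x := Π₀ l, (Mf l).V x
  acg := fun _ => inferInstance
  mod := fun _ => inferInstance
  map h := DFinsupp.mapRange.linearMap fun l => (Mf l).map h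
  map_id := by
    intro x v
    ext l
    simp [DFinsupp.mapRange.linearMap_apply, (Mf l).map_id]
  map_comp := by
    intro x y z h₁ h₂ v
    ext l
    simp [DFinsupp.mapRange.linearMap_apply, (Mf l).map_comp]

/-- Pointwise direct sum of two persistence modules. -/
def prodMod (M N : PersMod k P) : PersMod k P where
  V x := M.V x × N.V x
  acg := fun _ => inferInstance
  mod := fun _ => inferInstance
  map h := (M.map h).prodMap (N.map h)
  map_id := by
    intro x v
    cases v with
    | mk a b => simp [M.map_id, N.map_id]
  map_comp := by
    intro x y z h₁ h₂ v
    cases v with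
    | mk a b => simp [M.map_comp, N.map_comp]

/-- Isomorphism of persistence modules: a family of linear isomorphisms commuting with the
structure maps. -/
def PersIso (M N : PersMod k P) : Prop :=
  ∃ e : ∀ x, M.V x ≃ₗ[k] N.V x,
    ∀ (x y : P) (h : x ≤ y) (v : M.V x), e y (M.map h v) = N.map h (e x v)

/-- The zero persistence module (realized as the interval module of the empty set). -/
noncomputable def zeroPM (k : Type) [Field k] (P : Type) [Preorder P] : PersMod k P :=
  intervalModule k (∅ : Set P) isConvexSet_empty

def IsZeroMod (M : PersMod k P) : Prop := ∀ (x : P) (v : M.V x), v = 0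

/-- A persistence module is indecomposable if it is nonzero and any direct sum decomposition
has a zero summand. -/
def Indecomposable (M : PersMod k P) : Prop :=
  ¬ IsZeroMod M ∧
    ∀ M' M'' : PersMod k P, PersIso M (prodMod M' M'') → IsZeroMod M' ∨ IsZeroMod M''

/-- Pointwise finite-dimensionality. -/
def PFD (M : PersMod k P) : Prop := ∀ x, Module.Finite k (M.V x)

theorem isPersInterval_Ici (z : P) : IsPersInterval (Set.Ici z) := by
  refine ⟨⟨z, le_refl z⟩, isConvexSet_Ici z, ?_⟩
  intro s hs t ht
  refine ⟨2, fun i => if i = 0 then s else if i = 1 then z else t, by simp, by simp, ?_, ?_⟩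
  · intro i hi
    interval_cases i <;> simp [hs, ht, Set.mem_Ici]
  · intro i hi
    interval_cases i
    · exact Or.inr hs
    · exact Or.inl ht

end Core

/-!
Decompositions of `M` into nonzero submodules that are independent and spanning at every point are
preordered by refinement, and Zorn's lemma yields a maximal one. Its parts are indecomposable,
since a splitting `N ≅ M' ⊕ M''` of a part would refine it strictly.

A chain `C` of decompositions is bounded by the meets `⨅ E, κ E` over all choices `κ` of a part
`κ E` of each `E ∈ C`: at every point these are independent (`iSupIndep.iInf`), and they span by
pointwise finite-dimensionality. At a point `y` at most `dim M_y` parts are nonzero; a member of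
`C` maximizing their number has the same nonzero values at `y` as every finer member, so each of
its values at `y` lies in the meet of a suitable choice.
-/

section Lattice

variable {α : Type*} [CompleteLattice α]

theorem sSupIndep.eq_of_le_of_le {s : Set α} (hs : sSupIndep s) {a b c : α} (ha : a ∈ s)
    (hb : b ∈ s) (hc : c ≠ ⊥) (hca : c ≤ a) (hcb : c ≤ b) : a = b := by
  by_contra hab
  exact hc (le_bot_iff.1 (hs.pairwiseDisjoint ha hb hab hca hcb))

theorem sSup_insert_insert_diff {s : Set α} {a b c : α} (hb : b ∈ s) (habc : a ⊔ c = b) :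
    sSup (insert a (insert c (s \ {b}))) = sSup s := by
  rw [sSup_insert, sSup_insert, ← sup_assoc, habc, ← sSup_insert, Set.insert_sdiff_singleton,
    Set.insert_eq_of_mem hb]

variable [IsModularLattice α]

theorem sSupIndep.insert_insert_diff {s : Set α} (hs : sSupIndep s) {a b c : α} (hb : b ∈ s)
    (hac : Disjoint a c) (habc : a ⊔ c = b) :
    sSupIndep (insert a (insert c (s \ {b}))) := by
  have hbR : Disjoint (a ⊔ c) (sSup (s \ {b})) := by
    rw [habc]
    exact hs hb
  rintro x (rfl | rfl | ⟨hxs, hxb⟩)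
  · refine (hac.disjoint_sup_right_of_disjoint_sup_left hbR).mono_right (sSup_le ?_)
    rintro y ⟨rfl | rfl | hy, hya⟩
    exacts [absurd rfl hya, le_sup_left, le_sup_of_le_right (le_sSup hy)]
  · refine (hac.symm.disjoint_sup_right_of_disjoint_sup_left
      (sup_comm a x ▸ hbR)).mono_right (sSup_le ?_)
    rintro y ⟨rfl | rfl | hy, hya⟩
    exacts [le_sup_left, absurd rfl hya, le_sup_of_le_right (le_sSup hy)]
  · refine (hs hxs).mono_right (sSup_le ?_)
    have hb' : b ∈ s \ {x} := ⟨hb, Ne.symm hxb⟩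
    rintro y ⟨rfl | rfl | ⟨hys, -⟩, hyx⟩
    · exact le_sSup_of_le hb' (habc ▸ le_sup_left)
    · exact le_sSup_of_le hb' (habc ▸ le_sup_right)
    · exact le_sSup ⟨hys, hyx⟩

theorem sSupIndep.subset_of_refines {s t : Set α} (hs : sSupIndep s) (hbot : ⊥ ∉ s)
    (ht : t.Finite) (hts : ∀ b ∈ t, ∃ a ∈ s, b ≤ a) (hsup : sSup s ≤ sSup t)
    (hcard : t.ncard ≤ s.ncard) : s ⊆ t := by
  -- `t → s`, `b ↦ f b ≥ b`, is onto as `⊥ ∉ s`, hence bijective by counting; modularity then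
  -- forces every `a ∈ s` to equal its preimage.
  choose f hf hbf using hts
  let φ : t → s := fun b => ⟨f b b.2, hf b b.2⟩
  have hφ : Function.Surjective φ := by
    intro a
    by_contra! hna
    have hrest : sSup t ≤ sSup (s \ {a.1}) := sSup_le fun b hb =>
      le_sSup_of_le ⟨hf b hb, fun h => hna ⟨b, hb⟩ (Subtype.ext h)⟩ (hbf b hb)
    exact hbot ((hs a.2).eq_bot_of_le ((le_sSup a.2).trans (hsup.trans hrest)) ▸ a.2)
  have : Finite t := ht.to_subtype
  have hφinj : Function.Injective φ := (hφ.bijective_of_nat_card_le hcard).1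
  intro a ha
  obtain ⟨b, hb⟩ := hφ ⟨a, ha⟩
  have hba : b.1 ≤ a := (hbf b b.2).trans_eq (congrArg Subtype.val hb)
  have hfa : ∀ b' (hb' : b' ∈ t), b' ≠ b.1 → f b' hb' ≠ a := fun b' hb' hb'b h =>
    hb'b (congrArg Subtype.val
      (hφinj ((Subtype.ext h : φ ⟨b', hb'⟩ = ⟨a, ha⟩).trans hb.symm)))
  have hrest : Disjoint a (sSup (t \ {b.1})) := by
    refine (hs ha).mono_right (sSup_le fun b' hb' => ?_)
    exact le_sSup_of_le ⟨hf b' hb'.1, hfa b' hb'.1 hb'.2⟩ (hbf b' hb'.1)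
  have hat : a ≤ b.1 ⊔ sSup (t \ {b.1}) := by
    rw [← sSup_insert, Set.insert_sdiff_singleton, Set.insert_eq_of_mem b.2]
    exact (le_sSup ha).trans hsup
  have hab : a = b.1 := calc
    a = (b.1 ⊔ sSup (t \ {b.1})) ⊓ a := (inf_eq_right.2 hat).symm
    _ = b.1 ⊔ sSup (t \ {b.1}) ⊓ a := sup_inf_assoc_of_le _ hba
    _ = b.1 := by rw [hrest.symm.eq_bot, sup_bot_eq]
  exact hab ▸ b.2

end Lattice

section LinearAlgebra

variable {k : Type} [Field k]

theorem sSupIndep.ncard_le_finrank {V : Type} [AddCommGroup V] [Module k V]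
    [FiniteDimensional k V] {s : Set (Submodule k V)} (hs : sSupIndep s) (hbot : ⊥ ∉ s) :
    s.ncard ≤ Module.finrank k V := by
  have hs' := (sSupIndep_iff s).1 hs
  have := hs'.fintypeNeBotOfFiniteDimensional
  rw [← Nat.card_coe_set_eq,
    ← Nat.card_congr (Equiv.subtypeUnivEquiv fun N => ne_of_mem_of_not_mem N.2 hbot),
    Nat.card_eq_fintype_card]
  exact hs'.subtype_ne_bot_le_finrank

theorem DirectSum.coeLinearMap_mapRange_restrict {ι V W : Type} [DecidableEq ι]
    [AddCommGroup V] [Module k V] [AddCommGroup W] [Module k W]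
    (p : ι → Submodule k V) (q : ι → Submodule k W) (f : V →ₗ[k] W)
    (hf : ∀ i, ∀ v ∈ p i, f v ∈ q i) (w : DirectSum ι fun i => p i) :
    DirectSum.coeLinearMap q (DFinsupp.mapRange.linearMap (fun i => f.restrict (hf i)) w) =
      f (DirectSum.coeLinearMap p w) := by
  induction w using DirectSum.induction_on with
  | zero => simp
  | of i v =>
    rw [DFinsupp.mapRange.linearMap_apply, DirectSum.of, DFinsupp.singleAddHom_apply,
      DFinsupp.mapRange_single]
    exact (DirectSum.coeLinearMap_of q i _).trans
      (congrArg f (DirectSum.coeLinearMap_of p i v).symm)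
  | add w w' hw hw' => simp only [map_add, hw, hw']

namespace LinearMap

variable {A B V : Type} [AddCommGroup A] [Module k A] [AddCommGroup B] [Module k B]
  [AddCommGroup V] [Module k V]

theorem range_comp_inl_sup_range_comp_inr (g : A × B →ₗ[k] V) :
    range (g ∘ₗ inl k A B) ⊔ range (g ∘ₗ inr k A B) = range g := by
  rw [range_comp, range_comp, ← Submodule.map_sup, sup_range_inl_inr, Submodule.map_top]

theorem disjoint_range_comp_inl_inr {g : A × B →ₗ[k] V} (hg : Function.Injective g) :
    Disjoint (range (g ∘ₗ inl k A B)) (range (g ∘ₗ inr k A B)) := by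
  rw [range_comp, range_comp]
  exact Submodule.disjoint_map hg isCompl_range_inl_inr.disjoint

end LinearMap

end LinearAlgebra

section Submodules

variable {k : Type} [Field k] {P : Type} [Preorder P]

def persSubmodules (M : PersMod k P) : CompleteSublattice (∀ x, Submodule k (M.V x)) :=
  CompleteSublattice.mk' {N | ∀ ⦃x y⦄ (h : x ≤ y), (N x).map (M.map h) ≤ N y}
    (fun s hs x y h => by
      simp only [sSup_apply, Submodule.map_iSup]
      exact iSup_mono fun N => hs N.2 h)
    (fun s hs x y h => by
      rw [sInf_apply, sInf_apply, Submodule.map_le_iff_le_comap, Submodule.comap_iInf]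
      exact iInf_mono fun N => Submodule.map_le_iff_le_comap.1 (hs N.2 h))

abbrev PersSubmod (M : PersMod k P) : Type := persSubmodules M

namespace PersSubmod

variable {M : PersMod k P}

theorem map_mem (N : PersSubmod M) {x y : P} (h : x ≤ y) {v : M.V x} (hv : v ∈ N.1 x) :
    M.map h v ∈ N.1 y :=
  N.2 h ⟨v, hv, rfl⟩

@[simp]
protected theorem iSup_apply {ι : Sort*} (t : ι → PersSubmod M) (x : P) :
    (⨆ i, t i).1 x = ⨆ i, (t i).1 x := by
  rw [CompleteSublattice.coe_iSup, _root_.iSup_apply]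

@[simp]
protected theorem iInf_apply {ι : Sort*} (t : ι → PersSubmod M) (x : P) :
    (⨅ i, t i).1 x = ⨅ i, (t i).1 x := by
  rw [CompleteSublattice.coe_iInf, _root_.iInf_apply]

protected theorem sSup_apply (s : Set (PersSubmod M)) (x : P) :
    (sSup s).1 x = ⨆ N : s, N.1.1 x := by
  rw [sSup_eq_iSup', PersSubmod.iSup_apply]

protected theorem disjoint_iff {N N' : PersSubmod M} :
    Disjoint N N' ↔ ∀ x, Disjoint (N.1 x) (N'.1 x) := by
  rw [CompleteSublattice.disjoint_iff, Pi.disjoint_iff]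

instance : IsModularLattice (PersSubmod M) :=
  ⟨fun {_} b {_} hac x => IsModularLattice.sup_inf_le_assoc_of_le (b.1 x) (hac x)⟩

protected theorem iSupIndep_iff {ι : Type} {t : ι → PersSubmod M} :
    iSupIndep t ↔ ∀ x, iSupIndep fun i => (t i).1 x := by
  simp only [iSupIndep, PersSubmod.disjoint_iff, PersSubmod.iSup_apply]
  exact forall_comm

def toPersMod (N : PersSubmod M) : PersMod k P where
  V x := N.1 x
  map h := (M.map h).restrict fun _ => N.map_mem h
  map_id x v := Subtype.ext (M.map_id x v)
  map_comp h₁ h₂ v := Subtype.ext (M.map_comp h₁ h₂ v)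

def range {Q : PersMod k P} (f : ∀ x, Q.V x →ₗ[k] M.V x)
    (hf : ∀ {x y} (h : x ≤ y) v, f y (Q.map h v) = M.map h (f x v)) : PersSubmod M :=
  ⟨fun x => LinearMap.range (f x), fun x y h => by
    rintro _ ⟨_, ⟨v, rfl⟩, rfl⟩
    exact ⟨Q.map h v, hf h v⟩⟩

theorem exists_split_of_persIso {N : PersSubmod M} {M' M'' : PersMod k P}
    (he : PersIso (prodMod M' M'') N.toPersMod) :
    ∃ a c : PersSubmod M, Disjoint a c ∧ a ⊔ c = N ∧
      (a = ⊥ → IsZeroMod M') ∧ (c = ⊥ → IsZeroMod M'') := by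
  obtain ⟨e, he⟩ := he
  let g (x : P) : (prodMod M' M'').V x →ₗ[k] M.V x := (N.1 x).subtype ∘ₗ (e x).toLinearMap
  have hg_inj (x : P) : Function.Injective (g x) := Subtype.val_injective.comp (e x).injective
  have hg {x y : P} (h : x ≤ y) (w) : g y ((prodMod M' M'').map h w) = M.map h (g x w) :=
    congrArg Subtype.val (he x y h w)
  refine ⟨range (fun x => g x ∘ₗ LinearMap.inl k _ _) fun h v => ?_,
    range (fun x => g x ∘ₗ LinearMap.inr k _ _) fun h v => ?_, ?_, ?_, ?_, ?_⟩
  · have h0 : (prodMod M' M'').map h (v, 0) = (M'.map h v, 0) :=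
      Prod.ext rfl (map_zero (M''.map h))
    exact (congrArg (g _) h0).symm.trans (hg h (v, 0))
  · have h0 : (prodMod M' M'').map h (0, v) = (0, M''.map h v) :=
      Prod.ext (map_zero (M'.map h)) rfl
    exact (congrArg (g _) h0).symm.trans (hg h (0, v))
  · exact PersSubmod.disjoint_iff.2 fun x => LinearMap.disjoint_range_comp_inl_inr (hg_inj x)
  · refine Subtype.ext (funext fun x => ?_)
    refine (LinearMap.range_comp_inl_sup_range_comp_inr (g x)).trans ?_
    exact (LinearMap.range_comp_of_range_eq_top _ (e x).range).trans (Submodule.range_subtype _)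
  · intro ha x v
    have hv : g x (v, 0) ∈ (⊥ : PersSubmod M).1 x := ha ▸ ⟨v, rfl⟩
    exact congrArg Prod.fst ((map_eq_zero_iff _ (hg_inj x)).1 hv)
  · intro hc x v
    have hv : g x (0, v) ∈ (⊥ : PersSubmod M).1 x := hc ▸ ⟨v, rfl⟩
    exact congrArg Prod.snd ((map_eq_zero_iff _ (hg_inj x)).1 hv)

theorem eq_bot_of_isZeroMod {N : PersSubmod M} (h : IsZeroMod N.toPersMod) : N = ⊥ :=
  Subtype.ext (funext fun x =>
    (Submodule.eq_bot_iff _).2 fun v hv => congrArg Subtype.val (h x ⟨v, hv⟩))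

end PersSubmod

end Submodules

section Decompositions

variable {k : Type} [Field k] {P : Type} [Preorder P] {M : PersMod k P}

theorem PersIso.symm {N : PersMod k P} (h : PersIso M N) : PersIso N M := by
  obtain ⟨e, he⟩ := h
  refine ⟨fun x => (e x).symm, fun x y h w => (e y).injective ?_⟩
  rw [LinearEquiv.apply_symm_apply, he, LinearEquiv.apply_symm_apply]

structure PersDecomp (M : PersMod k P) : Type where
  parts : Set (PersSubmod M)
  indep : sSupIndep parts
  sSup_eq_top : sSup parts = ⊤
  bot_notMem : ⊥ ∉ parts

namespace PersDecomp

theorem iSupIndep_apply (D : PersDecomp M) (x : P) : iSupIndep fun N : D.parts => N.1.1 x :=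
  PersSubmod.iSupIndep_iff.1 ((sSupIndep_iff _).1 D.indep) x

theorem iSup_apply_eq_top (D : PersDecomp M) (x : P) : ⨆ N : D.parts, N.1.1 x = ⊤ := by
  rw [← PersSubmod.sSup_apply, D.sSup_eq_top]
  rfl

theorem persIso (D : PersDecomp M) : PersIso M (dSum fun N : D.parts => N.1.toPersMod) := by
  have hint (x : P) : DirectSum.IsInternal fun N : D.parts => N.1.1 x :=
    DirectSum.isInternal_submodule_of_iSupIndep_of_iSup_eq_top (D.iSupIndep_apply x)
      (D.iSup_apply_eq_top x)
  refine PersIso.symm ⟨fun x => LinearEquiv.ofBijective (DirectSum.coeLinearMap _) (hint x), ?_⟩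
  intro x y h w
  exact DirectSum.coeLinearMap_mapRange_restrict _ _ (M.map h) (fun N _ => N.1.map_mem h) w

instance : Preorder (PersDecomp M) where
  le D E := ∀ K ∈ E.parts, ∃ N ∈ D.parts, K ≤ N
  le_refl D K hK := ⟨K, hK, le_rfl⟩
  le_trans D E F hDE hEF K hK := by
    obtain ⟨L, hL, hKL⟩ := hEF K hK
    obtain ⟨N, hN, hLN⟩ := hDE L hL
    exact ⟨N, hN, hKL.trans hLN⟩

instance : Nonempty (PersDecomp M) :=
  ⟨{ parts := {⊤} \ {⊥}
     indep := (sSupIndep_singleton ⊤).mono Set.sdiff_subset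
     sSup_eq_top := by rw [sSup_sdiff_singleton_bot, sSup_singleton]
     bot_notMem := fun h => h.2 rfl }⟩

theorem eq_bot_or_eq_bot_of_isMax {D : PersDecomp M} (hD : IsMax D) {N a c : PersSubmod M}
    (hN : N ∈ D.parts) (hac : Disjoint a c) (hacN : a ⊔ c = N) : a = ⊥ ∨ c = ⊥ := by
  by_contra! hne
  let E : PersDecomp M :=
    { parts := insert a (insert c (D.parts \ {N}))
      indep := D.indep.insert_insert_diff hN hac hacN
      sSup_eq_top := by rw [sSup_insert_insert_diff hN hacN, D.sSup_eq_top]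
      bot_notMem := by
        rintro (h | h | ⟨h, -⟩)
        exacts [hne.1 h.symm, hne.2 h.symm, D.bot_notMem h] }
  have hDE : D ≤ E := by
    rintro K (rfl | rfl | ⟨hK, -⟩)
    exacts [⟨N, hN, hacN ▸ le_sup_left⟩, ⟨N, hN, hacN ▸ le_sup_right⟩, ⟨K, hK, le_rfl⟩]
  obtain ⟨Y, hY, hNY⟩ := hD hDE N hN
  rcases hY with rfl | rfl | ⟨hY, hYN⟩
  · exact hne.2 (le_bot_iff.1 (hac ((hacN ▸ le_sup_right).trans hNY) le_rfl))
  · exact hne.1 (le_bot_iff.1 (hac le_rfl ((hacN ▸ le_sup_left).trans hNY)))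
  · exact hYN (D.indep.eq_of_le_of_le hY hN (fun h => D.bot_notMem (h ▸ hN)) hNY le_rfl)

theorem indecomposable_of_isMax {D : PersDecomp M} (hD : IsMax D) {N : PersSubmod M}
    (hN : N ∈ D.parts) : Indecomposable N.toPersMod := by
  refine ⟨fun h0 => D.bot_notMem (PersSubmod.eq_bot_of_isZeroMod h0 ▸ hN), fun M' M'' he => ?_⟩
  obtain ⟨a, c, hac, hacN, ha, hc⟩ := PersSubmod.exists_split_of_persIso he.symm
  exact (D.eq_bot_or_eq_bot_of_isMax hD hN hac hacN).imp ha hc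

def valuesAt (D : PersDecomp M) (y : P) : Set (Submodule k (M.V y)) :=
  Set.range (fun N : D.parts => N.1.1 y) \ {⊥}

theorem sSupIndep_valuesAt (D : PersDecomp M) (y : P) : sSupIndep (D.valuesAt y) :=
  (D.iSupIndep_apply y).sSupIndep_range.mono Set.sdiff_subset

theorem bot_notMem_valuesAt (D : PersDecomp M) (y : P) : ⊥ ∉ D.valuesAt y := fun h => h.2 rfl

theorem sSup_valuesAt (D : PersDecomp M) (y : P) : sSup (D.valuesAt y) = ⊤ := by
  rw [valuesAt, sSup_sdiff_singleton_bot, sSup_range, D.iSup_apply_eq_top]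

theorem exists_le_of_mem_valuesAt {D E : PersDecomp M} (hDE : D ≤ E) {y : P}
    {b : Submodule k (M.V y)} (hb : b ∈ E.valuesAt y) : ∃ a ∈ D.valuesAt y, b ≤ a := by
  obtain ⟨⟨⟨K, hK⟩, rfl⟩, hKy⟩ := hb
  obtain ⟨N, hN, hKN⟩ := hDE K hK
  exact ⟨N.1 y, ⟨⟨⟨N, hN⟩, rfl⟩, fun h => hKy (le_bot_iff.1 (h ▸ hKN y))⟩, hKN y⟩

theorem exists_forall_exists_apply_le (hM : PFD M) {C : Set (PersDecomp M)}
    (hC : IsChain (· ≤ ·) C) (hne : C.Nonempty) (y : P) :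
    ∃ D₀ ∈ C, ∀ N ∈ D₀.parts, N.1 y ≠ ⊥ → ∀ E ∈ C, ∃ K ∈ E.parts, N.1 y ≤ K.1 y := by
  have := hM y
  let n : PersDecomp M → ℕ := fun D => (D.valuesAt y).ncard
  have hbdd : BddAbove (n '' C) := ⟨Module.finrank k (M.V y), by
    rintro _ ⟨D, -, rfl⟩
    exact (D.sSupIndep_valuesAt y).ncard_le_finrank (D.bot_notMem_valuesAt y)⟩
  obtain ⟨D₀, hD₀, hn⟩ := Nat.sSup_mem (hne.image n) hbdd
  refine ⟨D₀, hD₀, fun N hN hNy E hE => ?_⟩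
  rcases hC.total hD₀ hE with hle | hle
  · have hsub := (D₀.sSupIndep_valuesAt y).subset_of_refines (D₀.bot_notMem_valuesAt y)
      (WellFoundedGT.finite_of_sSupIndep (E.sSupIndep_valuesAt y))
      (fun b hb => exists_le_of_mem_valuesAt hle hb)
      (by rw [sSup_valuesAt, sSup_valuesAt]) ((le_csSup hbdd ⟨E, hE, rfl⟩).trans hn.ge)
    obtain ⟨⟨⟨K, hK⟩, hKN⟩, -⟩ := hsub ⟨⟨⟨N, hN⟩, rfl⟩, hNy⟩
    exact ⟨K, hK, hKN.ge⟩
  · obtain ⟨K, hK, hNK⟩ := hle N hN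
    exact ⟨K, hK, hNK y⟩

def ofIndep {ι : Type} (t : ι → PersSubmod M) (ht : iSupIndep t) (htop : iSup t = ⊤) :
    PersDecomp M where
  parts := Set.range t \ {⊥}
  indep := ht.sSupIndep_range.mono Set.sdiff_subset
  sSup_eq_top := by rw [sSup_sdiff_singleton_bot, sSup_range, htop]
  bot_notMem h := h.2 rfl

theorem bddAbove_of_isChain (hM : PFD M) {C : Set (PersDecomp M)} (hC : IsChain (· ≤ ·) C)
    (hne : C.Nonempty) : BddAbove C := by
  let t : (∀ E : C, E.1.parts) → PersSubmod M := fun κ => ⨅ E, (κ E).1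
  have ht : iSupIndep t := PersSubmod.iSupIndep_iff.2 fun x => by
    simp only [t, PersSubmod.iInf_apply]
    exact iSupIndep.iInf (fun (E : C) (N : E.1.parts) => N.1.1 x) fun E => E.1.iSupIndep_apply x
  have htop : iSup t = ⊤ := by
    refine Subtype.ext (funext fun y => eq_top_iff.2 ?_)
    obtain ⟨D₀, -, hD₀⟩ := exists_forall_exists_apply_le hM hC hne y
    rw [PersSubmod.iSup_apply, ← D₀.iSup_apply_eq_top y]
    refine iSup_le fun N => ?_
    by_cases hNy : N.1.1 y = ⊥
    · exact hNy ▸ bot_le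
    choose K hK hNK using hD₀ N N.2 hNy
    refine le_iSup_of_le (fun E => ⟨K E E.2, hK E E.2⟩) ?_
    simp only [PersSubmod.iInf_apply]
    exact le_iInf fun E => hNK E E.2
  refine ⟨ofIndep t ht htop, fun E hE K hK => ?_⟩
  obtain ⟨⟨κ, rfl⟩, -⟩ := hK
  exact ⟨κ ⟨E, hE⟩, (κ ⟨E, hE⟩).2, iInf_le _ _⟩

end PersDecomp

end Decompositions

/-- **Existence of decomposition into indecomposables.**
Every pointwise finite-dimensional persistence module over an arbitrary poset is isomorphic
to a direct sum of a family of indecomposable persistence modules. -/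
theorem decomposition_into_indecomposables (k P : Type) [Field k] [PartialOrder P]
    (M : PersMod k P) (hM : PFD M) :
    ∃ (Λ : Type) (Mf : Λ → PersMod k P),
      (∀ l, Indecomposable (Mf l)) ∧ PersIso M (dSum Mf) := by
  obtain ⟨D, hD⟩ := zorn_le_nonempty fun C hC hne => PersDecomp.bddAbove_of_isChain hM hC hne
  exact ⟨D.parts, fun N => N.1.toPersMod, fun N => D.indecomposable_of_isMax hD N.2, D.persIso⟩
end

section
/- A one-parameter family of pairwise non-isomorphic indecomposable representations of the 4-star poset: Let k be a field, n ≥ 1, and λ ∈ k. Let Q be the poset with elements {1, 2, 3, 4, c}, where i < c for each i ∈ {1,2,3,4} and the elements 1, 2, 3, 4 are pairwise incomparable. Let J(λ) be the n × n Jordan block with λ on the diagonal, 1 on the superdiagonal, and 0 elsewhere. Define the Q-module M^λ by M^λ_i = kⁿ for i = 1, 2, 3, 4 and M^λ_c = kⁿ ⊕ kⁿ, with structure maps M^λ_{1,c}(x) = (x, 0), M^λ_{2,c}(x) = (0, x), M^λ_{3,c}(x) = (x, x), and M^λ_{4,c}(x) = (x, J(λ)x). Then M^λ is indecomposable, and for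 λ ≠ λ' in k, M^λ and M^{λ'} are not isomorphic. -/
set_option autoImplicit false

open Classical

/-- The 4-star poset: four pairwise-incomparable elements `a1, a2, a3, a4`, each below a
common top element `c`. -/
inductive FourStar : Type
  | a1 | a2 | a3 | a4 | c
  deriving DecidableEq

instance : PartialOrder FourStar where
  le x y := x = y ∨ y = FourStar.c
  le_refl x := Or.inl rfl
  le_trans x y z hxy hyz := by
    rcases hyz with rfl | rfl
    · exact hxy
    · exact Or.inr rfl
  le_antisymm x y h₁ h₂ := by
    rcases h₁ with rfl | rfl
    · rfl
    · rcases h₂ with rfl | rfl <;> rfl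

instance : ∀ x y : FourStar, Decidable (x ≤ y) := fun x y =>
  decidable_of_iff (x = y ∨ y = FourStar.c) Iff.rfl

/-- The `n × n` Jordan block with eigenvalue `lam`. -/
def jordanMatrix (k : Type) [Field k] (n : ℕ) (lam : k) : Matrix (Fin n) (Fin n) k :=
  fun i j => if j = i then lam else if (j : ℕ) = (i : ℕ) + 1 then 1 else 0

/-- The representation `M^λ` of the 4-star poset: `kⁿ` at each leaf, `kⁿ ⊕ kⁿ` at the
center, with maps `x ↦ (x,0)`, `x ↦ (0,x)`, `x ↦ (x,x)` and `x ↦ (x, J(λ)x)`. -/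
noncomputable def Mlam (k : Type) [Field k] (n : ℕ) (lam : k) : PersMod k FourStar where
  V x := match x with
    | .c => (Fin n → k) × (Fin n → k)
    | _ => Fin n → k
  acg := fun x => by
    cases x
    case c => exact (inferInstance : AddCommGroup ((Fin n → k) × (Fin n → k)))
    all_goals exact (inferInstance : AddCommGroup (Fin n → k))
  mod := fun x => by
    cases x
    case c => exact (inferInstance : Module k ((Fin n → k) × (Fin n → k)))
    all_goals exact (inferInstance : Module k (Fin n → k))
  map {x y} _ :=
    match x, y with
    | .a1, .a1 => LinearMap.id
    | .a2, .a2 => LinearMap.id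
    | .a3, .a3 => LinearMap.id
    | .a4, .a4 => LinearMap.id
    | .c, .c => LinearMap.id
    | .a1, .c => LinearMap.prod LinearMap.id 0
    | .a2, .c => LinearMap.prod 0 LinearMap.id
    | .a3, .c => LinearMap.prod LinearMap.id LinearMap.id
    | .a4, .c => LinearMap.prod LinearMap.id (Matrix.toLin' (jordanMatrix k n lam))
    | _, _ => 0
  map_id := by
    intro x v
    cases x <;> rfl
  map_comp := by
    intro x y z h₁ h₂ v
    cases x <;> cases y <;> cases z <;>
      first
        | rfl
        | exact absurd h₁ (by decide)
        | exact absurd h₂ (by decide)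

/-! A morphism `M^λ → M^λ'` is determined by its component `g` at the leaf `1`: compatibility
with the maps `x ↦ (x, 0)` and `x ↦ (0, x)` makes its component at `c` equal to
`(a, b) ↦ (g a, g₂ b)`, the diagonal `x ↦ (x, x)` forces `g₂ = g`, and the graph
`x ↦ (x, J(λ) x)` forces `g J(λ) = J(λ') g`.

For indecomposability, a direct sum decomposition yields an idempotent endomorphism, whose `g`
is an idempotent commuting with the nilpotent shift `N = J(λ) - λ`. The kernel and image of `g`
are `N`-invariant, so if both were nonzero each would meet `ker N`; but `ker N` is a line, so
`g = 0` or `g = 1`. For non-isomorphism, an invertible `g` with `g J(λ) = J(λ') g` carries the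
eigenvector `e₀` of `J(λ)` to an eigenvector of `J(λ')` for `λ`, i.e. to an eigenvector of the
nilpotent `J(λ') - λ'` for `λ - λ'`, forcing `λ = λ'`.
-/

section

variable {K V : Type*} [Field K] [AddCommGroup V] [Module K V]

theorem IsNilpotent.exists_pow_apply_ne_zero {N : Module.End K V} (hN : IsNilpotent N) {w : V}
    (hw : w ≠ 0) : ∃ m : ℕ, (N ^ m) w ≠ 0 ∧ N ((N ^ m) w) = 0 := by
  classical
  have hex : ∃ m, (N ^ m) w = 0 := by
    obtain ⟨m, hm⟩ := hN
    exact ⟨m, by rw [hm, LinearMap.zero_apply]⟩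
  have hpos : Nat.find hex ≠ 0 := fun h => hw (by simpa [h] using Nat.find_spec hex)
  refine ⟨Nat.find hex - 1, Nat.find_min hex (by omega), ?_⟩
  rw [← Module.End.mul_apply, ← pow_succ', Nat.sub_add_cancel (Nat.one_le_iff_ne_zero.mpr hpos)]
  exact Nat.find_spec hex

theorem Module.End.exists_apply_eq_smul_of_commute_of_isNilpotent {A N : Module.End K V}
    (hN : IsNilpotent N) (hc : Commute A N) {w : V} (hw : w ≠ 0) {s : K} (hs : A w = s • w) :
    ∃ x : V, x ≠ 0 ∧ N x = 0 ∧ A x = s • x := by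
  obtain ⟨m, hm, hker⟩ := hN.exists_pow_apply_ne_zero hw
  refine ⟨(N ^ m) w, hm, hker, ?_⟩
  rw [← Module.End.mul_apply, (hc.pow_right m).eq, Module.End.mul_apply, hs, map_smul]

theorem IsIdempotentElem.eq_zero_or_one_of_commute {A N : Module.End K V}
    (hA : IsIdempotentElem A) (hN : IsNilpotent N) (hc : Commute A N) (e : V)
    (hker : ∀ v, N v = 0 → ∃ c : K, v = c • e) :
    A = 0 ∨ A = 1 := by
  by_contra! h
  obtain ⟨v, hv⟩ : ∃ v, A v ≠ 0 := by
    by_contra! h'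
    exact h.1 (LinearMap.ext h')
  obtain ⟨u, hu⟩ : ∃ u, A u ≠ u := by
    by_contra! h'
    exact h.2 (LinearMap.ext h')
  -- `A` has an eigenvector for `1` and one for `0` inside the line `ker N`: impossible.
  obtain ⟨y, hy, hNy, hAy⟩ := Module.End.exists_apply_eq_smul_of_commute_of_isNilpotent hN hc hv
    (s := 1) (by rw [one_smul, ← Module.End.mul_apply, hA.eq])
  obtain ⟨x, hx, hNx, hAx⟩ := Module.End.exists_apply_eq_smul_of_commute_of_isNilpotent hN hc
    (sub_ne_zero.mpr hu.symm) (s := 0)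
    (by rw [zero_smul, map_sub, ← Module.End.mul_apply, hA.eq, sub_self])
  obtain ⟨a, rfl⟩ := hker x hNx
  obtain ⟨b, rfl⟩ := hker y hNy
  have ha : a ≠ 0 := by rintro rfl; simp at hx
  have hba : b • e = (b / a) • a • e := by rw [smul_smul, div_mul_cancel₀ b ha]
  apply hy
  rw [← one_smul K (b • e), ← hAy, hba, map_smul, hAx, zero_smul, smul_zero]

end

section Jordan

open Matrix

variable {k : Type} [Field k] {n : ℕ}

theorem jordanMatrix_eq_smul_one_add (lam : k) :
    jordanMatrix k n lam = lam • 1 + jordanMatrix k n 0 := by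
  ext i j
  by_cases h : j = i
  · simp [jordanMatrix, h]
  · simp [jordanMatrix, h, Ne.symm h]

theorem isNilpotent_jordanMatrix_zero : IsNilpotent (jordanMatrix k n 0) := by
  have htri : (jordanMatrix k n 0).IsUpperTriangular := fun i j (hji : j < i) => by
    simp [jordanMatrix, hji.ne, show (j : ℕ) ≠ i + 1 by omega]
  refine ⟨n, ?_⟩
  simpa [charpoly_of_isUpperTriangular _ htri, jordanMatrix] using
    aeval_self_charpoly (jordanMatrix k n 0)

theorem jordanMatrix_zero_mulVec_apply (v : Fin n → k) (i : Fin n) :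
    (jordanMatrix k n 0 *ᵥ v) i = if h : (i : ℕ) + 1 < n then v ⟨i + 1, h⟩ else 0 := by
  have hterm : ∀ j : Fin n,
      jordanMatrix k n 0 i j * v j = if (j : ℕ) = i + 1 then v j else 0 := by
    intro j
    by_cases hji : j = i <;> simp [jordanMatrix, hji]
  simp only [mulVec, dotProduct, hterm]
  split_ifs with h
  · rw [Finset.sum_eq_single ⟨i + 1, h⟩ (fun j _ hj => if_neg fun h' => hj (Fin.ext h'))
      (by simp)]
    simp
  · exact Finset.sum_eq_zero fun j _ => if_neg (by omega)

theorem eq_smul_single_of_jordanMatrix_zero_mulVec_eq_zero (hn : 1 ≤ n) {v : Fin n → k}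
    (hv : jordanMatrix k n 0 *ᵥ v = 0) : v = v ⟨0, hn⟩ • Pi.single ⟨0, hn⟩ 1 := by
  ext ⟨_ | i, hi⟩
  · simp
  · have := congrFun hv ⟨i, by omega⟩
    rw [jordanMatrix_zero_mulVec_apply, dif_pos hi] at this
    simpa [Pi.single_apply, Fin.ext_iff] using this

theorem jordanMatrix_mulVec_single_zero (hn : 1 ≤ n) (lam : k) :
    jordanMatrix k n lam *ᵥ Pi.single ⟨0, hn⟩ 1 = lam • Pi.single ⟨0, hn⟩ 1 := by
  have hker : jordanMatrix k n 0 *ᵥ Pi.single ⟨0, hn⟩ 1 = 0 := by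
    ext i
    rw [jordanMatrix_zero_mulVec_apply]
    split_ifs <;> simp [Fin.ext_iff]
  rw [jordanMatrix_eq_smul_one_add lam, add_mulVec, hker, add_zero, smul_mulVec, one_mulVec]

theorem isNilpotent_toLin'_jordanMatrix_zero : IsNilpotent (toLin' (jordanMatrix k n 0)) := by
  obtain ⟨m, hm⟩ := isNilpotent_jordanMatrix_zero (k := k) (n := n)
  exact ⟨m, by rw [← toLin'_pow, hm, map_zero]⟩

theorem toLin'_jordanMatrix (lam : k) :
    toLin' (jordanMatrix k n lam) = lam • 1 + toLin' (jordanMatrix k n 0) := by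
  rw [jordanMatrix_eq_smul_one_add lam, map_add, map_smul, toLin'_one, Module.End.one_eq_id]

theorem IsIdempotentElem.eq_zero_or_one_of_commute_jordanMatrix (hn : 1 ≤ n) {lam : k}
    {A : Module.End k (Fin n → k)} (hA : IsIdempotentElem A)
    (hc : Commute A (toLin' (jordanMatrix k n lam))) : A = 0 ∨ A = 1 := by
  have hc₀ : Commute A (toLin' (jordanMatrix k n 0)) := by
    have := hc.sub_right ((Commute.one_right A).smul_right lam)
    rwa [toLin'_jordanMatrix lam, add_sub_cancel_left] at this
  refine hA.eq_zero_or_one_of_commute isNilpotent_toLin'_jordanMatrix_zero hc₀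
    (Pi.single ⟨0, hn⟩ 1) fun v hv => ⟨v ⟨0, hn⟩, ?_⟩
  exact eq_smul_single_of_jordanMatrix_zero_mulVec_eq_zero hn (by rwa [toLin'_apply] at hv)

theorem eq_of_injective_comp_toLin'_jordanMatrix (hn : 1 ≤ n) {lam lam' : k}
    {g : (Fin n → k) →ₗ[k] (Fin n → k)} (hg : Function.Injective g)
    (h : g ∘ₗ toLin' (jordanMatrix k n lam) = toLin' (jordanMatrix k n lam') ∘ₗ g) :
    lam = lam' := by
  obtain ⟨e₀, he₀, hJe₀⟩ :
      ∃ e₀ : Fin n → k, e₀ ≠ 0 ∧ toLin' (jordanMatrix k n lam) e₀ = lam • e₀ :=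
    ⟨Pi.single ⟨0, hn⟩ 1, by simp, by rw [toLin'_apply, jordanMatrix_mulVec_single_zero]⟩
  have hw : g e₀ ≠ 0 := (map_ne_zero_iff g hg).mpr he₀
  have hJ₀ : toLin' (jordanMatrix k n 0) (g e₀) = (lam - lam') • g e₀ := by
    have hJ := LinearMap.congr_fun h e₀
    rw [LinearMap.comp_apply, LinearMap.comp_apply, hJe₀, map_smul, toLin'_jordanMatrix lam',
      LinearMap.add_apply] at hJ
    rw [sub_smul, hJ]
    simp
  have hev : Module.End.HasEigenvalue (toLin' (jordanMatrix k n 0)) (lam - lam') :=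
    Module.End.hasEigenvalue_of_hasEigenvector ⟨Module.End.mem_eigenspace_iff.mpr hJ₀, hw⟩
  exact sub_eq_zero.mp (hev.isNilpotent_of_isNilpotent isNilpotent_toLin'_jordanMatrix_zero).eq_zero

end Jordan

section PersHom

variable {k : Type} [Field k] {P : Type} [Preorder P]

def IsPersHom {M N : PersMod k P} (f : ∀ x, M.V x →ₗ[k] N.V x) : Prop :=
  ∀ (x y : P) (h : x ≤ y) (v : M.V x), f y (M.map h v) = N.map h (f x v)

theorem isPersHom_zero (M N : PersMod k P) : IsPersHom (0 : ∀ x, M.V x →ₗ[k] N.V x) :=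
  fun _ _ _ _ => by simp

theorem isPersHom_one (M : PersMod k P) : IsPersHom (1 : ∀ x, Module.End k (M.V x)) :=
  fun _ _ _ _ => rfl

theorem IsPersHom.comp {L M N : PersMod k P} {g : ∀ x, M.V x →ₗ[k] N.V x}
    {f : ∀ x, L.V x →ₗ[k] M.V x} (hg : IsPersHom g) (hf : IsPersHom f) :
    IsPersHom fun x => g x ∘ₗ f x :=
  fun x y h v => by simp only [LinearMap.comp_apply, hf x y h, hg x y h]

theorem IsPersHom.symm {M N : PersMod k P} {e : ∀ x, M.V x ≃ₗ[k] N.V x}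
    (he : IsPersHom fun x => (e x).toLinearMap) : IsPersHom fun x => (e x).symm.toLinearMap :=
  fun x y h v => (e y).injective <| by
    simpa using (he x y h ((e x).symm v)).symm

theorem isPersHom_inl_comp_fst (M N : PersMod k P) :
    IsPersHom (M := prodMod M N) (N := prodMod M N)
      fun x => LinearMap.inl k (M.V x) (N.V x) ∘ₗ LinearMap.fst k (M.V x) (N.V x) :=
  fun x y h v => by
    change (M.map h v.1, 0) = (M.map h v.1, N.map h 0)
    rw [map_zero]

theorem indecomposable_of_isIdempotentElem {M : PersMod k P} (hM : ¬ IsZeroMod M)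
    (h : ∀ q : ∀ x, Module.End k (M.V x), IsPersHom q → IsIdempotentElem q →
      q = 0 ∨ q = 1) :
    Indecomposable M := by
  refine ⟨hM, fun M' M'' ⟨e, he⟩ => ?_⟩
  let π : ∀ x, Module.End k ((prodMod M' M'').V x) := fun x =>
    LinearMap.inl k (M'.V x) (M''.V x) ∘ₗ LinearMap.fst k (M'.V x) (M''.V x)
  let q : ∀ x, Module.End k (M.V x) := fun x =>
    (e x).symm.toLinearMap ∘ₗ π x ∘ₗ (e x).toLinearMap
  have hq : IsPersHom q := (IsPersHom.symm he).comp ((isPersHom_inl_comp_fst M' M'').comp he)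
  have hq_apply : ∀ x w, q x ((e x).symm w) = (e x).symm (π x w) := fun x w => by simp [q]
  have hidem : IsIdempotentElem q := by
    funext x
    refine LinearMap.ext fun v => ?_
    have hπ : π x (π x (e x v)) = π x (e x v) := rfl
    simp [q, hπ]
  rcases h q hq hidem with h0 | h1
  · left
    intro x w
    have hw := hq_apply x (w, 0)
    rw [h0] at hw
    exact congrArg Prod.fst ((e x).symm.map_eq_zero_iff.mp hw.symm)
  · right
    intro x w
    have hw := hq_apply x (0, w)
    rw [h1] at hw
    exact congrArg Prod.snd ((e x).symm.injective hw)

end PersHom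

namespace Mlam

open Matrix

variable {k : Type} [Field k] {n : ℕ} {lam lam' : k}
  {f : ∀ x, (Mlam k n lam).V x →ₗ[k] (Mlam k n lam').V x}

theorem apply_c_of_isPersHom (hf : IsPersHom f) (a b : Fin n → k) :
    f .c (a, b) = (f .a1 a, f .a2 b) := by
  have hadd : ∀ u w : (Fin n → k) × (Fin n → k), f .c (u + w) = f .c u + f .c w :=
    map_add (f .c)
  have h1 : f .c (a, 0) = (f .a1 a, 0) := hf .a1 .c (Or.inr rfl) a
  have h2 : f .c (0, b) = (0, f .a2 b) := hf .a2 .c (Or.inr rfl) b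
  rw [show ((a, b) : (Fin n → k) × (Fin n → k)) = (a, 0) + (0, b) by simp, hadd, h1, h2]
  exact Prod.ext (add_zero _) (zero_add _)

theorem a3_eq_a1_of_isPersHom (hf : IsPersHom f) : f .a3 = f .a1 :=
  LinearMap.ext fun (v : Fin n → k) => by
    have h3 : f .c (v, v) = (f .a3 v, f .a3 v) := hf .a3 .c (Or.inr rfl) v
    rw [apply_c_of_isPersHom hf] at h3
    exact (congrArg Prod.fst h3).symm

theorem a2_eq_a1_of_isPersHom (hf : IsPersHom f) : f .a2 = f .a1 :=
  LinearMap.ext fun (v : Fin n → k) => by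
    have h3 : f .c (v, v) = (f .a3 v, f .a3 v) := hf .a3 .c (Or.inr rfl) v
    rw [apply_c_of_isPersHom hf] at h3
    exact (congrArg Prod.snd h3).trans (congrArg Prod.fst h3).symm

theorem a4_eq_a1_of_isPersHom (hf : IsPersHom f) : f .a4 = f .a1 :=
  LinearMap.ext fun (v : Fin n → k) => by
    have h4 : f .c (v, toLin' (jordanMatrix k n lam) v) =
        (f .a4 v, toLin' (jordanMatrix k n lam') (f .a4 v)) := hf .a4 .c (Or.inr rfl) v
    rw [apply_c_of_isPersHom hf] at h4
    exact (congrArg Prod.fst h4).symm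

theorem comp_toLin'_jordanMatrix_of_isPersHom (hf : IsPersHom f) :
    f .a1 ∘ₗ toLin' (jordanMatrix k n lam) = toLin' (jordanMatrix k n lam') ∘ₗ f .a1 :=
  LinearMap.ext fun (v : Fin n → k) => by
    have h4 : f .c (v, toLin' (jordanMatrix k n lam) v) =
        (f .a4 v, toLin' (jordanMatrix k n lam') (f .a4 v)) := hf .a4 .c (Or.inr rfl) v
    rw [apply_c_of_isPersHom hf, a2_eq_a1_of_isPersHom hf, a4_eq_a1_of_isPersHom hf] at h4
    exact congrArg Prod.snd h4

theorem hom_ext {f' : ∀ x, (Mlam k n lam).V x →ₗ[k] (Mlam k n lam').V x} (hf : IsPersHom f)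
    (hf' : IsPersHom f') (h : f .a1 = f' .a1) : f = f' := by
  funext x
  cases x with
  | a1 => exact h
  | a2 => rw [a2_eq_a1_of_isPersHom hf, a2_eq_a1_of_isPersHom hf', h]
  | a3 => rw [a3_eq_a1_of_isPersHom hf, a3_eq_a1_of_isPersHom hf', h]
  | a4 => rw [a4_eq_a1_of_isPersHom hf, a4_eq_a1_of_isPersHom hf', h]
  | c =>
    refine LinearMap.ext fun ⟨a, b⟩ => ?_
    rw [apply_c_of_isPersHom hf, apply_c_of_isPersHom hf', a2_eq_a1_of_isPersHom hf,
      a2_eq_a1_of_isPersHom hf', h]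

theorem not_isZeroMod (hn : 1 ≤ n) (lam : k) : ¬ IsZeroMod (Mlam k n lam) := fun h =>
  one_ne_zero (congrFun (h .a1 fun _ => 1) ⟨0, hn⟩)

end Mlam

/-- **A one-parameter family of pairwise non-isomorphic indecomposable representations of
the 4-star poset.**  For every `λ` in the field `k`, the module `M^λ` is indecomposable,
and `M^λ ≇ M^{λ'}` whenever `λ ≠ λ'`. -/
theorem fourStar_indecomposable_family (k : Type) [Field k] (n : ℕ) (hn : 1 ≤ n) :
    (∀ lam : k, Indecomposable (Mlam k n lam)) ∧
    (∀ lam lam' : k, lam ≠ lam' → ¬ PersIso (Mlam k n lam) (Mlam k n lam')) := by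
  refine ⟨fun lam => indecomposable_of_isIdempotentElem (Mlam.not_isZeroMod hn lam)
    fun q hq hidem => ?_, fun lam lam' hne ⟨e, he⟩ => hne ?_⟩
  · have hc : Commute (q .a1) (Matrix.toLin' (jordanMatrix k n lam)) :=
      Mlam.comp_toLin'_jordanMatrix_of_isPersHom hq
    have hidem₁ : IsIdempotentElem (q .a1) := congrFun hidem .a1
    rcases hidem₁.eq_zero_or_one_of_commute_jordanMatrix hn hc with h | h
    · exact Or.inl (Mlam.hom_ext hq (isPersHom_zero _ _) h)
    · exact Or.inr (Mlam.hom_ext hq (isPersHom_one _) h)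
  · exact eq_of_injective_comp_toLin'_jordanMatrix hn (e .a1).injective
      (Mlam.comp_toLin'_jordanMatrix_of_isPersHom he)
end
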